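/- Let A ∈ ℝ^{m×n}, J ⊂ [n] with |J| = k, I_* ⊂ [m] with |I_*| = k+p, ε > 0. Let Π_J, Π_{I_*} be the corresponding selection matrices, set C = AΠ_J, U = Π_{I_*}^T A Π_J, and assume U has full column rank k. Let C = Q_C R_C be a thin QR factorization and assume Π_{I_*}^T Q_C has full column rank. Then ‖C U_ε^† Π_{I_*}^T‖₂ ≤ ‖(Π_{I_*}^T Q_C)^†‖₂, where U_ε^† is the ε-truncated pseudoinverse of U. -/

import Mathlib

/-!
Since `Π_{I_*}ᵀ Q_C` has full column rank, its pseudoinverse `H` is a left inverse, so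
`R_C = H Π_{I_*}ᵀ Q_C R_C = H U = H W Σ Vᵀ`. Because `Σ Σ_ε⁻¹ = D` is the 0/1 diagonal
selecting the singular values `≥ ε`, this factors `C U_ε† Π_{I_*}ᵀ = Q_C H (W D Wᵀ Π_{I_*}ᵀ)`.
Now `Q_C`, `W` and `Π_{I_*}` have orthonormal columns and `D` has entries in `{0, 1}`, so all
of them and their transposes have spectral norm at most `1`. The spectral norm `spec` is
Mathlib's ℓ² operator norm on matrices.
-/

open Matrix

noncomputable section

/-- `B` is the Moore–Penrose pseudoinverse of `A` (the four Penrose conditions). -/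
def IsMP {m n : ℕ} (A : Matrix (Fin m) (Fin n) ℝ) (B : Matrix (Fin n) (Fin m) ℝ) : Prop :=
  A * B * A = A ∧ B * A * B = B ∧ (A * B)ᵀ = A * B ∧ (B * A)ᵀ = B * A

/-- Euclidean norm of a vector. -/
def enorm₂ {a : ℕ} (v : Fin a → ℝ) : ℝ := Real.sqrt (∑ i, (v i) ^ 2)

/-- Spectral (ℓ2 operator) norm of a matrix. -/
def spec {a b : ℕ} (M : Matrix (Fin a) (Fin b) ℝ) : ℝ :=
  sSup {r | ∃ x : Fin b → ℝ, enorm₂ x = 1 ∧ r = enorm₂ (M.mulVec x)}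

/-- Selection matrix whose columns are the columns of the identity indexed by `g`. -/
def sel {a b : ℕ} (g : Fin a → Fin b) : Matrix (Fin b) (Fin a) ℝ :=
  fun i j => if g j = i then 1 else 0

open scoped Matrix.Norms.L2Operator

lemma enorm₂_eq_norm_toLp {a : ℕ} (v : Fin a → ℝ) : enorm₂ v = ‖WithLp.toLp 2 v‖ := by
  simp [enorm₂, EuclideanSpace.norm_eq]

lemma spec_eq_l2_opNorm {a b : ℕ} (M : Matrix (Fin a) (Fin b) ℝ) : spec M = ‖M‖ := by
  rw [l2_opNorm_def, ← ContinuousLinearMap.sSup_sphere_eq_norm, spec]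
  congr 1
  ext r
  constructor
  · rintro ⟨x, hx, rfl⟩
    refine ⟨WithLp.toLp 2 x, by simpa [enorm₂_eq_norm_toLp] using hx, ?_⟩
    simp [enorm₂_eq_norm_toLp]
  · rintro ⟨x, hx, rfl⟩
    exact ⟨x.ofLp, by simpa [enorm₂_eq_norm_toLp] using hx, by rw [enorm₂_eq_norm_toLp]; rfl⟩

lemma Matrix.isUnit_of_rank_eq_card {n K : Type*} [Fintype n] [DecidableEq n] [Field K]
    {M : Matrix n n K} (h : M.rank = Fintype.card n) : IsUnit M := by
  rw [← mulVec_surjective_iff_isUnit, ← coe_mulVecLin, ← LinearMap.range_eq_top]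
  apply Submodule.eq_top_of_finrank_eq
  rw [Module.finrank_fintype_fun_eq_card]
  exact h

lemma IsMP.mul_eq_one_of_rank_eq {m n : ℕ} {B : Matrix (Fin m) (Fin n) ℝ}
    {H : Matrix (Fin n) (Fin m) ℝ} (hH : IsMP B H) (hB : B.rank = n) : H * B = 1 := by
  obtain ⟨hBHB, hHBH, -, -⟩ := hH
  have hidem : IsIdempotentElem (H * B) := by
    rw [IsIdempotentElem, ← Matrix.mul_assoc, hHBH]
  have hrank : (H * B).rank = Fintype.card (Fin n) := by
    refine le_antisymm (rank_le_card_width _) ?_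
    calc Fintype.card (Fin n) = (B * (H * B)).rank := by
          rw [← Matrix.mul_assoc, hBHB, hB, Fintype.card_fin]
      _ ≤ (H * B).rank := rank_mul_le_right _ _
  exact (IsIdempotentElem.iff_eq_one_of_isUnit (isUnit_of_rank_eq_card hrank)).1 hidem

lemma sel_transpose_mul_sel {a b : ℕ} {f : Fin a → Fin b} (hf : Function.Injective f) :
    (sel f)ᵀ * sel f = 1 := by
  ext i j
  simp [sel, Matrix.mul_apply, Matrix.one_apply, hf.eq_iff, eq_comm]

lemma Matrix.diagonal_mul_diagonal_truncatedInv {n : Type*} [Fintype n] [DecidableEq n]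
    {ε : ℝ} (hε : 0 < ε) (σ : n → ℝ) :
    diagonal σ * diagonal (fun i => if ε ≤ σ i then (σ i)⁻¹ else 0)
      = diagonal (fun i => if ε ≤ σ i then 1 else 0) := by
  rw [diagonal_mul_diagonal]
  congr 1
  ext i
  split_ifs with h
  · exact mul_inv_cancel₀ (hε.trans_le h).ne'
  · exact mul_zero _

section L2OpNorm

variable {𝕜 l m n : Type*} [RCLike 𝕜] [Fintype l] [Fintype m] [Fintype n] [DecidableEq n]

lemma Matrix.l2_opNorm_diagonal_le_one {d : n → 𝕜} (hd : ∀ i, ‖d i‖ ≤ 1) :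
    ‖diagonal d‖ ≤ 1 := by
  rw [l2_opNorm_diagonal]
  exact (pi_norm_le_iff_of_nonneg zero_le_one).2 hd

lemma Matrix.l2_opNorm_le_one_of_conjTranspose_mul_self {Q : Matrix m n 𝕜} (hQ : Qᴴ * Q = 1) :
    ‖Q‖ ≤ 1 := by
  have h : ‖Q‖ * ‖Q‖ ≤ 1 := by
    rw [← l2_opNorm_conjTranspose_mul_self, hQ, ← diagonal_one]
    exact l2_opNorm_diagonal_le_one fun _ => norm_one.le
  nlinarith [norm_nonneg Q]

lemma Matrix.l2_opNorm_mul_le_one [DecidableEq m] {A : Matrix l m 𝕜} {B : Matrix m n 𝕜}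
    (hA : ‖A‖ ≤ 1) (hB : ‖B‖ ≤ 1) : ‖A * B‖ ≤ 1 :=
  (l2_opNorm_mul A B).trans (mul_le_one₀ hA (norm_nonneg B) hB)

end L2OpNorm

lemma Matrix.l2_opNorm_transpose {m n : Type*} [Fintype m] [Fintype n] [DecidableEq m]
    [DecidableEq n] (A : Matrix m n ℝ) : ‖Aᵀ‖ = ‖A‖ := by
  rw [← conjTranspose_eq_transpose_of_trivial, l2_opNorm_conjTranspose]

lemma Matrix.l2_opNorm_le_one_of_transpose_mul_self {m n : Type*} [Fintype m] [Fintype n]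
    [DecidableEq n] {Q : Matrix m n ℝ} (hQ : Qᵀ * Q = 1) : ‖Q‖ ≤ 1 :=
  l2_opNorm_le_one_of_conjTranspose_mul_self (by rwa [conjTranspose_eq_transpose_of_trivial])

theorem stabilized_projector_norm_bound_general {m n k p : ℕ} (ε : ℝ) (hε : 0 < ε)
    (A : Matrix (Fin m) (Fin n) ℝ)
    (f : Fin (k + p) → Fin m) (hf : Function.Injective f)
    (g : Fin k → Fin n)
    (QC : Matrix (Fin m) (Fin k) ℝ) (RC : Matrix (Fin k) (Fin k) ℝ)
    (hQR : A * sel g = QC * RC) (hQC : QCᵀ * QC = 1)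
    (W : Matrix (Fin (k + p)) (Fin k) ℝ) (V : Matrix (Fin k) (Fin k) ℝ) (σ : Fin k → ℝ)
    (hW : Wᵀ * W = 1) (hV : Vᵀ * V = 1)
    (hU : (sel f)ᵀ * A * sel g = W * Matrix.diagonal σ * Vᵀ)
    (hQCrank : ((sel f)ᵀ * QC).rank = k)
    (H : Matrix (Fin k) (Fin (k + p)) ℝ) (hH : IsMP ((sel f)ᵀ * QC) H) :
    spec (A * sel g * (V * Matrix.diagonal (fun i => if ε ≤ σ i then (σ i)⁻¹ else 0) * Wᵀ) * (sel f)ᵀ)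
      ≤ spec H := by
  have hRC : RC = H * (W * diagonal σ * Vᵀ) := by
    rw [← hU, ← one_mul RC, ← hH.mul_eq_one_of_rank_eq hQCrank]
    simp only [Matrix.mul_assoc, hQR]
  set P := W * diagonal (fun i => if ε ≤ σ i then (1 : ℝ) else 0) * Wᵀ * (sel f)ᵀ
  have hfactor : A * sel g * (V * diagonal (fun i => if ε ≤ σ i then (σ i)⁻¹ else 0) * Wᵀ)
      * (sel f)ᵀ = QC * H * P := by
    rw [hQR, hRC]
    simp only [P, ← diagonal_mul_diagonal_truncatedInv hε σ, Matrix.mul_assoc]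
    rw [← Matrix.mul_assoc Vᵀ V, hV, Matrix.one_mul]
  have hP : ‖P‖ ≤ 1 := by
    refine l2_opNorm_mul_le_one (l2_opNorm_mul_le_one (l2_opNorm_mul_le_one
      (l2_opNorm_le_one_of_transpose_mul_self hW) ?_) ?_) ?_
    · exact l2_opNorm_diagonal_le_one fun i => by split_ifs <;> simp
    · rw [l2_opNorm_transpose]; exact l2_opNorm_le_one_of_transpose_mul_self hW
    · rw [l2_opNorm_transpose]
      exact l2_opNorm_le_one_of_transpose_mul_self (sel_transpose_mul_sel hf)
  rw [hfactor, spec_eq_l2_opNorm, spec_eq_l2_opNorm]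
  calc ‖QC * H * P‖ ≤ ‖QC‖ * ‖H‖ * ‖P‖ :=
        (l2_opNorm_mul (QC * H) P).trans
          (mul_le_mul_of_nonneg_right (l2_opNorm_mul QC H) (norm_nonneg P))
    _ ≤ 1 * ‖H‖ * 1 := by
        gcongr
        exact l2_opNorm_le_one_of_transpose_mul_self hQC
    _ = ‖H‖ := by ring

/-- `‖C U_ε† Π_{I_*}ᵀ‖₂ ≤ ‖(Π_{I_*}ᵀ Q_C)†‖₂` where `C = A Π_J`,
`U = Π_{I_*}ᵀ A Π_J` has full column rank, and `C = Q_C R_C` is a thin QR factorization. -/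
theorem stabilized_projector_norm_bound {m n k p : ℕ} (ε : ℝ) (hε : 0 < ε)
    (A : Matrix (Fin m) (Fin n) ℝ)
    (f : Fin (k + p) → Fin m) (hf : Function.Injective f)
    (g : Fin k → Fin n) (hg : Function.Injective g)
    (QC : Matrix (Fin m) (Fin k) ℝ) (RC : Matrix (Fin k) (Fin k) ℝ)
    (hQR : A * sel g = QC * RC) (hQC : QCᵀ * QC = 1)
    (W : Matrix (Fin (k + p)) (Fin k) ℝ) (V : Matrix (Fin k) (Fin k) ℝ) (σ : Fin k → ℝ)
    (hW : Wᵀ * W = 1) (hV : Vᵀ * V = 1) (hV' : V * Vᵀ = 1) (hσ : ∀ i, 0 ≤ σ i)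
    (hU : (sel f)ᵀ * A * sel g = W * Matrix.diagonal σ * Vᵀ)
    (hUrank : ((sel f)ᵀ * A * sel g).rank = k)
    (hQCrank : ((sel f)ᵀ * QC).rank = k)
    (H : Matrix (Fin k) (Fin (k + p)) ℝ) (hH : IsMP ((sel f)ᵀ * QC) H) :
    spec (A * sel g * (V * Matrix.diagonal (fun i => if ε ≤ σ i then (σ i)⁻¹ else 0) * Wᵀ) * (sel f)ᵀ)
      ≤ spec H :=
  stabilized_projector_norm_bound_general ε hε A f hf g QC RC hQR hQC W V σ hW hV hU hQCrank H hH
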